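/- arXiv:1201.0340 — 6 statements merged into one kernel-verified Lean document; each statement's English description precedes it below -/
import Mathlib

section
/- (Pataraia) In a directed-complete poset P, any monotone map f : P → P has a fixed point above every post-fixed point: if x ≤ f(x), then there exists z ≥ x with f(z) = z. This is provable constructively. -/
/-- (Pataraia) In a directed-complete poset, any monotone map has a fixed point above every
post-fixed point. -/
theorem stmt3 {P : Type*} [PartialOrder P]
    (hdc : ∀ D : Set P, D.Nonempty → DirectedOn (· ≤ ·) D → ∃ s, IsLUB D s)
    (f : P → P) (hf : Monotone f) (x : P) (hx : x ≤ f x) :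
    ∃ z, x ≤ z ∧ f z = z := by
  set Q : Set P := {y | x ≤ y ∧ y ≤ f y} with hQ
  have hub : ∀ c ⊆ Q, IsChain (· ≤ ·) c → ∃ ub ∈ Q, ∀ z ∈ c, z ≤ ub := by
    intro c hcQ hc
    rcases c.eq_empty_or_nonempty with rfl | hne
    · exact ⟨x, ⟨le_rfl, hx⟩, fun z hz => absurd hz (Set.notMem_empty z)⟩
    · obtain ⟨s, hs⟩ := hdc c hne hc.directedOn
      refine ⟨s, ⟨?_, ?_⟩, fun z hz => hs.1 hz⟩
      · obtain ⟨y, hy⟩ := hne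
        exact (hcQ hy).1.trans (hs.1 hy)
      · exact hs.2 fun z hz => (hcQ hz).2.trans (hf (hs.1 hz))
  obtain ⟨m, hm⟩ := zorn_le₀ Q hub
  refine ⟨m, hm.1.1, ?_⟩
  have hfm : f m ∈ Q := ⟨hm.1.1.trans hm.1.2, hf hm.1.2⟩
  exact le_antisymm (hm.2 hfm hm.1.2) hm.1.2
end

section
/- If a directed-complete poset M of endomaps (monotone progressive maps on Q under pointwise order) is directed, then it has a greatest element t, and this t satisfies g ∘ t = t for every g ∈ M; consequently t(x) is a fixed point of any given monotone progressive f : Q → Q above x, for every x ∈ Q. -/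
/-- If the poset `M` of monotone progressive endomaps of `Q` (pointwise order) is
directed-complete and directed, then it has a greatest element `t` with `g ∘ t = t` for every
`g ∈ M`; consequently `t x` is a fixed point of the given monotone progressive `f` above `x`,
for every `x`. -/
theorem stmt5 {Q : Type*} [PartialOrder Q] (f : Q → Q) (hf : Monotone f)
    (hprog : ∀ x, x ≤ f x)
    (M : Set (Q → Q)) (hM : M = {g : Q → Q | Monotone g ∧ ∀ x, x ≤ g x})
    (hMdc : ∀ D ⊆ M, D.Nonempty → DirectedOn (fun g h : Q → Q => ∀ x, g x ≤ h x) D →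
      ∃ s ∈ M, (∀ g ∈ D, ∀ x, g x ≤ s x) ∧
        ∀ u ∈ M, (∀ g ∈ D, ∀ x, g x ≤ u x) → ∀ x, s x ≤ u x)
    (hMdir : DirectedOn (fun g h : Q → Q => ∀ x, g x ≤ h x) M) :
    ∃ t ∈ M, (∀ g ∈ M, ∀ x, g x ≤ t x) ∧ (∀ g ∈ M, g ∘ t = t) ∧
      ∀ x : Q, x ≤ t x ∧ f (t x) = t x := by
  have hid : id ∈ M := by
    rw [hM]; exact ⟨monotone_id, fun x => le_rfl⟩
  obtain ⟨t, htM, htub, htlub⟩ := hMdc M le_rfl ⟨id, hid⟩ hMdir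
  obtain ⟨htmono, htprog⟩ : Monotone t ∧ ∀ x, x ≤ t x := by rw [hM] at htM; exact htM
  have hcomp : ∀ g ∈ M, g ∘ t = t := by
    intro g hg
    obtain ⟨hgmono, hgprog⟩ : Monotone g ∧ ∀ x, x ≤ g x := by rw [hM] at hg; exact hg
    have hgt : g ∘ t ∈ M := by
      rw [hM]; exact ⟨hgmono.comp htmono, fun x => (htprog x).trans (hgprog (t x))⟩
    funext x
    exact le_antisymm (htub _ hgt x) (hgprog (t x))
  have hfM : f ∈ M := by rw [hM]; exact ⟨hf, hprog⟩
  exact ⟨t, htM, htub, hcomp, fun x => ⟨htprog x, congrFun (hcomp f hfM) x⟩⟩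
end

section
/- (Dacar) The following are equivalent (intuitionistically): (1) every progressive map on a chain-complete poset has a fixed point above every point; (2) every progressive map on a directed-complete poset has a fixed point above every post-fixed point. -/
universe u

/-- (Dacar) The Bourbaki–Witt principle for chain-complete posets is equivalent to the
Bourbaki–Witt principle for directed-complete posets. -/
theorem stmt6 :
    (∀ (P : Type u) [PartialOrder P] (f : P → P),
        (∀ C : Set P, IsChain (· ≤ ·) C → ∃ s, IsLUB C s) →
        (∀ x, x ≤ f x) → ∀ x : P, ∃ z, x ≤ z ∧ f z = z) ↔
    (∀ (P : Type u) [PartialOrder P] (f : P → P),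
        (∀ D : Set P, D.Nonempty → DirectedOn (· ≤ ·) D → ∃ s, IsLUB D s) →
        (∀ x, x ≤ f x) → ∀ x : P, x ≤ f x → ∃ z, x ≤ z ∧ f z = z) := by
  constructor
  · -- (1) ⇒ (2): restrict to the upper set of x
    intro h P _ f hdir hf x _
    set S := {y : P // x ≤ y}
    have hf' : ∀ y : S, x ≤ f y.1 := fun y => le_trans y.2 (hf y.1)
    let g : S → S := fun y => ⟨f y.1, hf' y⟩
    have hcc : ∀ C : Set S, IsChain (· ≤ ·) C → ∃ s, IsLUB C s := by
      intro C hC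
      rcases Set.eq_empty_or_nonempty C with rfl | ⟨c0, hc0⟩
      · exact ⟨⟨x, le_refl x⟩, fun u hu => absurd hu (by simp),
          fun u _ => u.2⟩
      · have hC' : IsChain (· ≤ ·) (Subtype.val '' C) := by
          rintro _ ⟨a, ha, rfl⟩ _ ⟨b, hb, rfl⟩ hne
          rcases hC ha hb (fun e => hne (congrArg _ e)) with h1 | h1
          · exact Or.inl h1
          · exact Or.inr h1
        have hdir' : DirectedOn (· ≤ ·) (Subtype.val '' C) :=
          IsChain.directedOn hC'
        rcases hdir (Subtype.val '' C) ⟨c0.1, c0, hc0, rfl⟩ hdir' with ⟨s, hs⟩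
        have hxs : x ≤ s := le_trans c0.2 (hs.1 ⟨c0, hc0, rfl⟩)
        refine ⟨⟨s, hxs⟩, ?_, ?_⟩
        · intro c hc
          exact hs.1 ⟨c, hc, rfl⟩
        · intro u hu
          refine hs.2 ?_
          rintro _ ⟨c, hc, rfl⟩
          exact hu hc
    rcases h S g hcc (fun y => hf y.1) ⟨x, le_refl x⟩ with ⟨z, hxz, hz⟩
    exact ⟨z.1, hxz, congrArg Subtype.val hz⟩
  · -- (2) ⇒ (1): use the dcpo of chains of P
    intro h P _ f hcc hf x
    set Q := {C : Set P // IsChain (· ≤ ·) C}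
    -- supremum of a chain, via choice
    let sup : Q → P := fun C => (hcc C.1 C.2).choose
    have hsup : ∀ C : Q, IsLUB C.1 (sup C) := fun C => (hcc C.1 C.2).choose_spec
    -- the progressive map on chains
    have hFchain : ∀ C : Q, IsChain (· ≤ ·) (C.1 ∪ {f (sup C)}) := by
      intro C a ha b hb hne
      rcases ha with ha | ha
      · rcases hb with hb | hb
        · exact C.2 ha hb hne
        · simp only [Set.mem_singleton_iff] at hb
          subst hb
          exact Or.inl (le_trans ((hsup C).1 ha) (hf _))
      · rcases hb with hb | hb
        · simp only [Set.mem_singleton_iff] at ha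
          subst ha
          exact Or.inr (le_trans ((hsup C).1 hb) (hf _))
        · exact absurd (by simp at ha hb; rw [ha, hb]) hne
    let F : Q → Q := fun C => ⟨C.1 ∪ {f (sup C)}, hFchain C⟩
    -- Q is directed-complete
    have hQdir : ∀ D : Set Q, D.Nonempty → DirectedOn (· ≤ ·) D → ∃ s, IsLUB D s := by
      intro D hDne hDdir
      have hU : IsChain (· ≤ ·) (⋃ C ∈ D, C.1) := by
        intro a ha b hb hne
        simp only [Set.mem_iUnion] at ha hb
        rcases ha with ⟨C1, hC1, ha⟩
        rcases hb with ⟨C2, hC2, hb⟩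
        rcases hDdir C1 hC1 C2 hC2 with ⟨C3, _, h13, h23⟩
        exact C3.2 (h13 ha) (h23 hb) hne
      refine ⟨⟨⋃ C ∈ D, C.1, hU⟩, ?_, ?_⟩
      · intro C hC a ha
        simp only [Set.mem_iUnion]
        exact ⟨C, hC, ha⟩
      · intro U hU a ha
        simp only [Set.mem_iUnion] at ha
        rcases ha with ⟨C, hC, ha⟩
        exact hU hC ha
    -- F is progressive, and the singleton {x} is a post-fixed point
    have hFprog : ∀ C : Q, C ≤ F C := fun C => Set.subset_union_left
    have hxchain : IsChain (· ≤ ·) ({x} : Set P) := Set.Subsingleton.isChain (by simp)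
    rcases h Q F hQdir hFprog ⟨{x}, hxchain⟩ (hFprog _) with ⟨B, hxB, hB⟩
    have hmem : f (sup B) ∈ B.1 := by
      have : f (sup B) ∈ (F B).1 := Or.inr rfl
      rwa [hB] at this
    have h1 : f (sup B) ≤ sup B := (hsup B).1 hmem
    have h2 : sup B ≤ f (sup B) := hf _
    refine ⟨sup B, ?_, le_antisymm h1 h2⟩
    exact (hsup B).1 (hxB (Set.mem_singleton x))
end

section
/- If every fixed point of a certain progressive map exists, one obtains the Knaster-Tarski principle from Bourbaki-Witt: assuming that every progressive map on every chain-complete poset has a fixed point above every point, it follows that every monotone map on a chain-complete poset has a fixed point above every post-fixed point. -/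
/-!
Restrict a monotone map `f` to the post-fixed points above a post-fixed point `x`. This set is
again chain-complete (the supremum of a chain of post-fixed points is post-fixed by monotonicity,
and `x` serves as the supremum of the empty chain), and on it `f` is progressive, so a fixed point
of the restriction given by Bourbaki–Witt is a fixed point of `f` above `x`.
-/

universe u

open Set

section

variable {P : Type*} [PartialOrder P]

def postfixedPointsAbove (f : P → P) (x : P) : Set P := {y | x ≤ y ∧ y ≤ f y}

lemma IsLUB.le_apply_of_forall_le_apply {f : P → P} (hf : Monotone f) {C : Set P} {s : P}
    (hs : IsLUB C s) (hC : ∀ c ∈ C, c ≤ f c) : s ≤ f s :=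
  hs.2 fun c hc => (hC c hc).trans (hf (hs.1 hc))

lemma mapsTo_postfixedPointsAbove {f : P → P} (hf : Monotone f) (x : P) :
    MapsTo f (postfixedPointsAbove f x) (postfixedPointsAbove f x) :=
  fun _ ⟨hxy, hy⟩ => ⟨hxy.trans hy, hf hy⟩

lemma exists_isLUB_of_isChain_postfixedPointsAbove
    (hcc : ∀ C : Set P, IsChain (· ≤ ·) C → ∃ s, IsLUB C s) {f : P → P} (hf : Monotone f)
    {x : P} (hx : x ≤ f x) (C : Set (postfixedPointsAbove f x)) (hC : IsChain (· ≤ ·) C) :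
    ∃ s, IsLUB C s := by
  -- adjoining `x` makes the chain nonempty without changing its upper bounds inside the subtype
  let D := insert x (Subtype.val '' C)
  have hD : IsChain (· ≤ ·) D := by
    refine (hC.image_of_map_rel _ _ Subtype.val fun _ _ h => h).insert ?_
    rintro _ ⟨c, -, rfl⟩ -
    exact Or.inl c.2.1
  obtain ⟨s, hs⟩ := hcc D hD
  have hxs : x ≤ s := hs.1 (mem_insert x _)
  have hsf : s ≤ f s := hs.le_apply_of_forall_le_apply hf <| by
    rintro _ (rfl | ⟨c, -, rfl⟩)
    exacts [hx, c.2.2]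
  refine ⟨⟨s, hxs, hsf⟩, fun c hc => hs.1 (mem_insert_of_mem x ⟨c, hc, rfl⟩), fun b hb => ?_⟩
  refine hs.2 ?_
  rw [upperBounds_insert]
  exact ⟨b.2.1, by rintro _ ⟨c, hc, rfl⟩; exact hb hc⟩

end

/-- The Bourbaki–Witt principle implies the Knaster–Tarski principle for chain-complete
posets: if every progressive map on a chain-complete poset has a fixed point above every point,
then every monotone map on a chain-complete poset has a fixed point above every post-fixed
point. -/
theorem stmt8
    (hBW : ∀ (P : Type u) [PartialOrder P] (f : P → P),
      (∀ C : Set P, IsChain (· ≤ ·) C → ∃ s, IsLUB C s) →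
      (∀ x, x ≤ f x) → ∀ x : P, ∃ z, x ≤ z ∧ f z = z) :
    ∀ (P : Type u) [PartialOrder P] (f : P → P),
      (∀ C : Set P, IsChain (· ≤ ·) C → ∃ s, IsLUB C s) →
      Monotone f → ∀ x : P, x ≤ f x → ∃ z, x ≤ z ∧ f z = z := by
  intro P _ f hcc hf x hx
  have hmaps := mapsTo_postfixedPointsAbove hf x
  obtain ⟨z, hxz, hz⟩ := hBW _ (hmaps.restrict _ _ _)
    (exists_isLUB_of_isChain_postfixedPointsAbove hcc hf hx) (fun y => y.2.2) ⟨x, le_rfl, hx⟩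
  exact ⟨z, hxz, congrArg Subtype.val hz⟩
end

section
/- Given a set W of chain-complete posets, the poset Q = ∏_{P ∈ W} P^{Prog(P)} (where Prog(P) is the set of progressive endomaps of P) with pointwise order is chain-complete, and the map H : Q → Q defined by H(F)(P)(f) = f(F(P)(f)) is progressive; moreover H has a fixed point if and only if every progressive map on every poset in W has a fixed point. -/
/-- Given a family `W = (Pf i)` of chain-complete posets, the poset
`Q = ∏_{P ∈ W} P^{Prog P}` with pointwise order is chain-complete, the map
`H F P f = f (F P f)` is progressive, and `H` has a fixed point iff every progressive map on
every member of the family has a fixed point. -/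
theorem stmt14 {ι : Type*} (Pf : ι → Type*) [∀ i, PartialOrder (Pf i)]
    (hcc : ∀ i, ∀ C : Set (Pf i), IsChain (· ≤ ·) C → ∃ s, IsLUB C s) :
    (∀ C : Set (∀ i, {f : Pf i → Pf i // ∀ x, x ≤ f x} → Pf i),
      IsChain (· ≤ ·) C → ∃ s, IsLUB C s) ∧
    (∀ F : ∀ i, {f : Pf i → Pf i // ∀ x, x ≤ f x} → Pf i,
      F ≤ fun i f => f.1 (F i f)) ∧
    ((∃ F : ∀ i, {f : Pf i → Pf i // ∀ x, x ≤ f x} → Pf i,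
        (fun i f => f.1 (F i f)) = F) ↔
      ∀ i, ∀ f : Pf i → Pf i, (∀ x, x ≤ f x) → ∃ z, f z = z) := by
  refine ⟨?_, ?_, ?_⟩
  · intro C hC
    have key : ∀ i (f : {f : Pf i → Pf i // ∀ x, x ≤ f x}),
        ∃ s, IsLUB ((fun F => F i f) '' C) s := by
      intro i f
      apply hcc
      rintro _ ⟨F, hF, rfl⟩ _ ⟨G, hG, rfl⟩ hne
      rcases hC.total hF hG with h | h
      · exact Or.inl (h i f)
      · exact Or.inr (h i f)
    choose s hs using key
    refine ⟨fun i f => s i f, ?_, ?_⟩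
    · intro F hF i f
      exact (hs i f).1 ⟨F, hF, rfl⟩
    · intro G hG i f
      exact (hs i f).2 (fun x hx => by
        rcases hx with ⟨F, hF, rfl⟩
        exact hG hF i f)
  · intro F i f
    exact f.2 (F i f)
  · constructor
    · rintro ⟨F, hF⟩ i f hf
      exact ⟨F i ⟨f, hf⟩, congrFun (congrFun hF i) ⟨f, hf⟩⟩
    · intro h
      choose z hz using fun i (f : {f : Pf i → Pf i // ∀ x, x ≤ f x}) => h i f.1 f.2
      exact ⟨z, funext fun i => funext fun f => hz i f⟩
end

section
/- If (Δ ⊣ Γ) : E → F is a geometric morphism of toposes and P is an internal chain-complete poset in E, then Γ(P) is an internal chain-complete poset in F. -/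
open CategoryTheory CategoryTheory.Limits

/-- An internal poset in a category `C`, presented by its (natural, local) order on
generalized elements `A ⟶ P`. -/
structure InternalPoset (C : Type*) [Category C] where
  P : C
  le : ∀ {A : C}, (A ⟶ P) → (A ⟶ P) → Prop
  le_refl : ∀ {A : C} (x : A ⟶ P), le x x
  le_trans : ∀ {A : C} (x y z : A ⟶ P), le x y → le y z → le x z
  le_antisymm : ∀ {A : C} (x y : A ⟶ P), le x y → le y x → x = y
  le_stable : ∀ {A B : C} (h : B ⟶ A) (x y : A ⟶ P), le x y → le (h ≫ x) (h ≫ y)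

namespace InternalPoset

variable {C : Type*} [Category C]

/-- `s` is a supremum of the family `S` of generalized elements at a given stage. -/
def IsSupFam (Pp : InternalPoset C) {A : C} (S : Set (A ⟶ Pp.P)) (s : A ⟶ Pp.P) : Prop :=
  (∀ x ∈ S, Pp.le x s) ∧ ∀ u, (∀ x ∈ S, Pp.le x u) → Pp.le s u

/-- A family of generalized elements is a chain when its members are pairwise comparable. -/
def IsChainFam (Pp : InternalPoset C) {A : C} (S : Set (A ⟶ Pp.P)) : Prop :=
  ∀ x ∈ S, ∀ y ∈ S, Pp.le x y ∨ Pp.le y x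

/-- `Pp` is (internally) chain-complete: every chain of generalized elements has a supremum,
stably under change of stage. -/
def ChainComplete (Pp : InternalPoset C) : Prop :=
  ∀ (A : C) (S : Set (A ⟶ Pp.P)), Pp.IsChainFam S →
    ∃ s, Pp.IsSupFam S s ∧
      ∀ (B : C) (h : B ⟶ A), Pp.IsSupFam ((fun x => h ≫ x) '' S) (h ≫ s)

/-- A morphism `f : P ⟶ P` is (internally) progressive: `x ≤ f(x)` for all generalized
elements `x`. -/
def Progressive (Pp : InternalPoset C) (f : Pp.P ⟶ Pp.P) : Prop :=
  ∀ {A : C} (x : A ⟶ Pp.P), Pp.le x (x ≫ f)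

end InternalPoset

/-- The Bourbaki–Witt principle holds in `C`: every internal progressive map on an internal
chain-complete poset has, internally, a fixed point (i.e. a fixed generalized element defined
on a cover of the terminal object). -/
def BWPrinciple (C : Type*) [Category C] [HasTerminal C] : Prop :=
  ∀ (Pp : InternalPoset C) (f : Pp.P ⟶ Pp.P),
    Pp.ChainComplete → Pp.Progressive f →
    ∃ (E : C) (e : E ⟶ ⊤_ C) (x : E ⟶ Pp.P), Epi e ∧ x ≫ f = x

/-- The direct image of an internal poset along a geometric morphism `(Δ ⊣ Γ)`: the object
`Γ(P)` ordered via the adjunction transposition. -/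
def gammaPoset {E F : Type*} [Category E] [Category F]
    (Γ : E ⥤ F) (Δ : F ⥤ E) (adj : Δ ⊣ Γ) (Pp : InternalPoset E) : InternalPoset F where
  P := Γ.obj Pp.P
  le {A} x y := Pp.le ((adj.homEquiv A Pp.P).symm x) ((adj.homEquiv A Pp.P).symm y)
  le_refl x := Pp.le_refl _
  le_trans x y z hxy hyz := Pp.le_trans _ _ _ hxy hyz
  le_antisymm x y h1 h2 := (adj.homEquiv _ Pp.P).symm.injective (Pp.le_antisymm _ _ h1 h2)
  le_stable {A B} h x y hxy := by
    have := Pp.le_stable (Δ.map h) _ _ hxy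
    simpa [Adjunction.homEquiv_naturality_left_symm] using this

/-! The order on `Γ(P)` is the order on transposes `Δ A ⟶ P`, so a chain at stage `A` in
`Γ(P)` is a chain at stage `Δ A` in `P`; its supremum transposes back, and stability under
`h : B ⟶ A` is stability of the supremum in `P` under `Δ.map h`. -/

theorem CategoryTheory.Adjunction.homEquiv_symm_image_comp {C D : Type*} [Category C]
    [Category D] {L : C ⥤ D} {R : D ⥤ C} (adj : L ⊣ R) {A B : C} {X : D} (h : B ⟶ A)
    (S : Set (A ⟶ R.obj X)) :
    (adj.homEquiv B X).symm '' ((h ≫ ·) '' S) = (L.map h ≫ ·) '' ((adj.homEquiv A X).symm '' S) := by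
  simp only [Set.image_image, Adjunction.homEquiv_naturality_left_symm]

namespace InternalPoset

variable {E F : Type*} [Category E] [Category F] {Γ : E ⥤ F} {Δ : F ⥤ E} (adj : Δ ⊣ Γ)
  (Pp : InternalPoset E) {A : F}

theorem gammaPoset_P : (gammaPoset Γ Δ adj Pp).P = Γ.obj Pp.P := rfl

theorem isChainFam_gammaPoset_iff {S : Set (A ⟶ Γ.obj Pp.P)} :
    (gammaPoset Γ Δ adj Pp).IsChainFam S ↔
      Pp.IsChainFam ((adj.homEquiv A Pp.P).symm '' S) := by
  simp only [IsChainFam, Set.forall_mem_image]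
  rfl

theorem isSupFam_gammaPoset_iff {S : Set (A ⟶ Γ.obj Pp.P)} {s : A ⟶ Γ.obj Pp.P} :
    (gammaPoset Γ Δ adj Pp).IsSupFam S s ↔
      Pp.IsSupFam ((adj.homEquiv A Pp.P).symm '' S) ((adj.homEquiv A Pp.P).symm s) := by
  simp only [IsSupFam, Set.forall_mem_image]
  exact and_congr Iff.rfl ((adj.homEquiv A Pp.P).symm.forall_congr fun _ => Iff.rfl)

end InternalPoset

open InternalPoset in
theorem stmt18_general {E F : Type*} [Category E] [Category F]
    (Γ : E ⥤ F) (Δ : F ⥤ E) (adj : Δ ⊣ Γ)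
    (Pp : InternalPoset E) (hcc : Pp.ChainComplete) :
    (gammaPoset Γ Δ adj Pp).ChainComplete := by
  intro A S hS
  dsimp only [gammaPoset_P] at S hS ⊢
  obtain ⟨s, hsup, hstable⟩ := hcc _ _ ((isChainFam_gammaPoset_iff adj Pp).1 hS)
  refine ⟨adj.homEquiv A Pp.P s, ?_, fun B h => ?_⟩
  · exact (isSupFam_gammaPoset_iff adj Pp).2 <| by rwa [Equiv.symm_apply_apply]
  · refine (isSupFam_gammaPoset_iff adj Pp).2 ?_
    rw [adj.homEquiv_symm_image_comp, adj.homEquiv_naturality_left_symm, Equiv.symm_apply_apply]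
    exact hstable _ (Δ.map h)

/-- If `(Δ ⊣ Γ) : E → F` is a geometric morphism of toposes and `P` is an internal
chain-complete poset in `E`, then `Γ(P)` is an internal chain-complete poset in `F`. -/
theorem stmt18 {E F : Type*} [Category E] [Category F]
    [CategoryTheory.Limits.HasFiniteLimits E] [CategoryTheory.Limits.HasFiniteLimits F]
    (Γ : E ⥤ F) (Δ : F ⥤ E) (adj : Δ ⊣ Γ)
    [CategoryTheory.Limits.PreservesFiniteLimits Δ]
    (Pp : InternalPoset E) (hcc : Pp.ChainComplete) :
    (gammaPoset Γ Δ adj Pp).ChainComplete :=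
  stmt18_general Γ Δ adj Pp hcc
end
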